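/- The polynomial P(z) = |z|⁴ + t|z|² Re(z²) on ℂ (t ∈ ℝ, t ≥ 0) is subharmonic on ℂ if and only if t ≤ 4/3. -/

import Mathlib

/-!
Averaging `P(c + w)` over the quarter turns `w ↦ iᵏ w` kills every monomial `w^a w̄^b` with
`a ≢ b (mod 4)`; for the quartic `P` what survives depends on `|w|` only, so the mean of `P` over
the circle `|w - c| = R` is `P(c) + R² ΔP(c) / 4 + R⁴` (circle averages are rotation invariant).
The sub-mean value inequality for all radii is therefore equivalent to
`ΔP / 4 = (4 + 3t) x² + (4 - 3t) y² ≥ 0`, i.e. to `t ≤ 4/3`.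
-/

/-- Subharmonicity on a set: upper semicontinuity together with the sub-mean value
inequality on all closed discs contained in the set. -/
def SubharmonicOn (u : ℂ → ℝ) (Ω : Set ℂ) : Prop :=
  UpperSemicontinuousOn u Ω ∧
    ∀ z ∈ Ω, ∀ ρ : ℝ, 0 < ρ → Metric.closedBall z ρ ⊆ Ω →
      u z ≤ (2 * Real.pi)⁻¹ *
        ∫ θ in (0:ℝ)..(2 * Real.pi), u (z + (ρ : ℂ) * Complex.exp ((θ : ℂ) * Complex.I))

open Complex Real

theorem subharmonicOn_univ_iff_of_continuous {u : ℂ → ℝ} (hu : Continuous u) :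
    SubharmonicOn u Set.univ ↔ ∀ z : ℂ, ∀ ρ : ℝ, 0 < ρ → u z ≤ circleAverage u z ρ := by
  simp only [SubharmonicOn, hu.upperSemicontinuous.upperSemicontinuousOn, Set.mem_univ,
    Set.subset_univ, forall_const, true_and]
  rfl

section Rotation

variable {E : Type*} [NormedAddCommGroup E] [NormedSpace ℝ E]

theorem circleAverage_comp_rotate (f : ℂ → E) (c : ℂ) (R : ℝ) {ζ : ℂ} (hζ : ‖ζ‖ = 1) :
    circleAverage (fun z => f (c + ζ * (z - c))) c R = circleAverage f c R := by
  obtain ⟨η, rfl⟩ : ∃ η : ℝ, ζ = exp (η * I) :=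
    ⟨arg ζ, by simpa [hζ] using (norm_mul_exp_arg_mul_I ζ).symm⟩
  rw [circleAverage_eq_integral_add η (f := f), circleAverage]
  congr 2 with θ
  simp only [circleMap, add_sub_cancel_left, ofReal_add, add_mul, Complex.exp_add]
  ring_nf

theorem circleAverage_eq_circleAverage_add_rotate {f : ℂ → E} (hf : Continuous f) (c : ℂ)
    (R : ℝ) {ζ : ℂ} (hζ : ‖ζ‖ = 1) :
    circleAverage f c R =
      circleAverage (fun z => (2 : ℝ)⁻¹ • (f z + f (c + ζ * (z - c)))) c R := by
  have hrot : Continuous fun z => f (c + ζ * (z - c)) := by fun_prop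
  rw [circleAverage_fun_smul, circleAverage_fun_add hf.continuousOn.circleIntegrable'
    hrot.continuousOn.circleIntegrable', circleAverage_comp_rotate f c R hζ, ← two_smul ℝ,
    smul_smul, inv_mul_cancel₀ two_ne_zero, one_smul]

end Rotation

noncomputable def quartic (t : ℝ) (z : ℂ) : ℝ := ‖z‖ ^ 4 + t * ‖z‖ ^ 2 * (z ^ 2).re

@[fun_prop]
theorem continuous_quartic (t : ℝ) : Continuous (quartic t) := by
  unfold quartic
  fun_prop

theorem quartic_eq_re_im (t : ℝ) (z : ℂ) :
    quartic t z =
      (z.re ^ 2 + z.im ^ 2) ^ 2 + t * (z.re ^ 2 + z.im ^ 2) * (z.re ^ 2 - z.im ^ 2) := by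
  rw [quartic, show (4 : ℕ) = 2 * 2 from rfl, pow_mul, Complex.sq_norm, Complex.normSq_apply,
    sq z, mul_re]
  ring

theorem quartic_quarter_turn_mean (t : ℝ) (c w : ℂ) :
    (quartic t (c + w) + quartic t (c - w) + quartic t (c + I * w) + quartic t (c - I * w)) / 4
      = quartic t c + ‖w‖ ^ 2 * (4 * ‖c‖ ^ 2 + 3 * t * (c ^ 2).re) + ‖w‖ ^ 4 := by
  simp only [quartic_eq_re_im, show (4 : ℕ) = 2 * 2 from rfl, pow_mul, Complex.sq_norm,
    Complex.normSq_apply, sq c, add_re, add_im, sub_re, sub_im, mul_re, mul_im, I_re, I_im]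
  ring

theorem circleAverage_quartic (t : ℝ) (c : ℂ) (R : ℝ) :
    circleAverage (quartic t) c R
      = quartic t c + R ^ 2 * (4 * ‖c‖ ^ 2 + 3 * t * (c ^ 2).re) + R ^ 4 := by
  rw [circleAverage_eq_circleAverage_add_rotate (continuous_quartic t) c R (ζ := -1) (by simp),
    circleAverage_eq_circleAverage_add_rotate (by fun_prop) c R (ζ := I) (by simp)]
  apply circleAverage_const_on_circle
  intro z hz
  rw [mem_sphere_iff_norm] at hz
  have hmean := quartic_quarter_turn_mean t c (z - c)
  rw [hz, sq_abs, (by decide : Even 4).pow_abs, add_sub_cancel] at hmean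
  simp only [smul_eq_mul, neg_one_mul, ← sub_eq_add_neg, add_sub_cancel_left]
  linarith

theorem forall_pos_sq_mul_add_pow_four_nonneg_iff (q : ℝ) :
    (∀ ρ : ℝ, 0 < ρ → 0 ≤ ρ ^ 2 * q + ρ ^ 4) ↔ 0 ≤ q := by
  refine ⟨fun h => ?_, fun hq ρ _ => by positivity⟩
  by_contra! hq
  have hρ : √(-q / 2) ^ 2 = -q / 2 := Real.sq_sqrt (by linarith)
  have hneg := h √(-q / 2) (Real.sqrt_pos.mpr (by linarith))
  nlinarith

theorem forall_four_mul_norm_sq_add_re_sq_nonneg_iff {t : ℝ} (ht : 0 ≤ t) :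
    (∀ z : ℂ, 0 ≤ 4 * ‖z‖ ^ 2 + 3 * t * (z ^ 2).re) ↔ t ≤ 4 / 3 := by
  refine ⟨fun h => ?_, fun ht' z => ?_⟩
  · have hI := h I
    simp only [norm_I, one_pow, mul_one, I_sq, neg_re, one_re, mul_neg, le_add_neg_iff_add_le,
      zero_add] at hI
    linarith
  · rw [Complex.sq_norm, Complex.normSq_apply, sq z, mul_re]
    nlinarith [mul_nonneg ht (mul_self_nonneg z.re),
      mul_nonneg (by linarith : 0 ≤ 4 - 3 * t) (mul_self_nonneg z.im)]

/-- `P(z) = |z|⁴ + t|z|²Re(z²)` (with `t ≥ 0`) is subharmonic on `ℂ`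
iff `t ≤ 4/3`. -/
theorem stmt_8 (t : ℝ) (ht : 0 ≤ t) :
    SubharmonicOn (fun z => ‖z‖ ^ 4 + t * ‖z‖ ^ 2 * (z ^ 2).re) Set.univ
      ↔ t ≤ 4/3 := by
  calc SubharmonicOn (quartic t) Set.univ
      ↔ ∀ z : ℂ, ∀ ρ : ℝ, 0 < ρ → quartic t z ≤ circleAverage (quartic t) z ρ :=
        subharmonicOn_univ_iff_of_continuous (continuous_quartic t)
    _ ↔ ∀ z : ℂ, 0 ≤ 4 * ‖z‖ ^ 2 + 3 * t * (z ^ 2).re := by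
        refine forall_congr' fun z => ?_
        simp only [circleAverage_quartic, add_assoc, le_add_iff_nonneg_right]
        exact forall_pos_sq_mul_add_pow_four_nonneg_iff _
    _ ↔ t ≤ 4 / 3 := forall_four_mul_norm_sq_add_re_sq_nonneg_iff ht
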